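/- arXiv:1812.01424 — 5 statements merged into one kernel-verified Lean document; each statement's English description precedes it below -/
import Mathlib

section
/- For every natural number N ≥ 1 and formal variable q, the sum over n from 1 to N of q^n/(1-q^n) equals the sum over n from 1 to N of the q-binomial coefficient [N choose n] times (-1)^(n-1) q^(n(n+1)/2)/(1-q^n). (van Hamme's identity, as an identity of rational functions in q.) -/
open Finset

/-- q-Pochhammer symbol (a;q)_n = ∏_{k=0}^{n-1} (1 - a q^k). -/
noncomputable def qP (a q : ℂ) (n : ℕ) : ℂ := ∏ k ∈ Finset.range n, (1 - a * q ^ k)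

/-- Gaussian (q-)binomial coefficient [N choose n]_q. -/
noncomputable def qBinom (q : ℂ) (N n : ℕ) : ℂ := qP q q N / (qP q q n * qP q q (N - n))

lemma fac_ne {x q : ℂ} (hx : ‖x‖ < 1) (hq : ‖q‖ < 1) (k : ℕ) : 1 - x * q ^ k ≠ 0 := by
  have h : ‖x * q ^ k‖ < 1 := by
    rw [norm_mul, norm_pow]
    calc ‖x‖ * ‖q‖ ^ k ≤ ‖x‖ * 1 := by
          exact mul_le_mul_of_nonneg_left (pow_le_one₀ (norm_nonneg q) hq.le) (norm_nonneg x)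
      _ = ‖x‖ := mul_one _
      _ < 1 := hx
  intro h0
  have : x * q ^ k = 1 := by linear_combination -h0
  rw [this] at h
  simp at h

lemma qP_ne {x q : ℂ} (hx : ‖x‖ < 1) (hq : ‖q‖ < 1) (n : ℕ) : qP x q n ≠ 0 := by
  unfold qP
  exact Finset.prod_ne_zero_iff.2 fun k _ => fac_ne hx hq k

lemma qP_succ (a q : ℂ) (n : ℕ) : qP a q (n + 1) = qP a q n * (1 - a * q ^ n) :=
  Finset.prod_range_succ _ _

lemma qP_succ' (a q : ℂ) (n : ℕ) : qP a q (n + 1) = (1 - a) * qP (a * q) q n := by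
  unfold qP
  rw [Finset.prod_range_succ']
  rw [mul_comm]
  congr 1
  · norm_num
  · exact Finset.prod_congr rfl fun k _ => by ring

lemma qBinom_zero {q : ℂ} (hq : ‖q‖ < 1) (N : ℕ) : qBinom q N 0 = 1 := by
  unfold qBinom qP
  simp [Finset.prod_ne_zero_iff.2 fun (k : ℕ) _ => fac_ne hq hq k]

lemma qBinom_self {q : ℂ} (hq : ‖q‖ < 1) (N : ℕ) : qBinom q N N = 1 := by
  unfold qBinom
  simp [qP, div_self, Finset.prod_ne_zero_iff.2 fun (k : ℕ) _ => fac_ne hq hq k]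

lemma pascal {q : ℂ} (hq : ‖q‖ < 1) (m d : ℕ) :
    qBinom q (m + d + 2) (m + 1) =
      qBinom q (m + d + 1) (m + 1) + q ^ (d + 1) * qBinom q (m + d + 1) m := by
  unfold qBinom
  rw [show m + d + 2 - (m + 1) = d + 1 by omega, show m + d + 1 - (m + 1) = d by omega,
    show m + d + 1 - m = d + 1 by omega,
    show m + d + 2 = (m + d + 1) + 1 by omega, qP_succ q q (m + d + 1),
    qP_succ q q m, qP_succ q q d]
  have hm := qP_ne hq hq m
  have hd := qP_ne hq hq d
  have hmd := qP_ne hq hq (m + d + 1)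
  have h1 := fac_ne hq hq m
  have h2 := fac_ne hq hq d
  field_simp
  ring

lemma tri (j : ℕ) : (j + 1) * (j + 1 + 1) / 2 = j * (j + 1) / 2 + (j + 1) := by
  obtain ⟨t, ht⟩ := Nat.even_mul_succ_self j
  have h2 : (j + 1) * (j + 1 + 1) = j * (j + 1) + 2 * (j + 1) := by ring
  omega

lemma pfrac {q : ℂ} (hq : ‖q‖ < 1) (M : ℕ) :
    ∀ x : ℂ, ‖x‖ < 1 →
      ∑ m ∈ Finset.range (M + 1),
          qBinom q M m * ((-1) ^ m * q ^ (m * (m + 1) / 2) / (1 - x * q ^ m)) =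
        qP q q M / qP x q (M + 1) := by
  induction M with
  | zero =>
    intro x hx
    simp [qBinom, qP]
  | succ M IH =>
    intro x hx
    have hxq : ‖x * q‖ < 1 := by
      calc ‖x * q‖ = ‖x‖ * ‖q‖ := norm_mul x q
        _ ≤ 1 * ‖q‖ := by exact mul_le_mul_of_nonneg_right hx.le (norm_nonneg q)
        _ = ‖q‖ := one_mul _
        _ < 1 := hq
    -- split the sum
    have hsplit :
        ∑ m ∈ Finset.range (M + 2),
            qBinom q (M + 1) m * ((-1) ^ m * q ^ (m * (m + 1) / 2) / (1 - x * q ^ m)) =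
          (∑ m ∈ Finset.range (M + 1),
              qBinom q M m * ((-1) ^ m * q ^ (m * (m + 1) / 2) / (1 - x * q ^ m))) +
            ∑ j ∈ Finset.range (M + 1),
              q ^ (M - j) * (qBinom q M j *
                ((-1) ^ (j + 1) * q ^ ((j + 1) * (j + 1 + 1) / 2) / (1 - x * q ^ (j + 1)))) := by
      rw [Finset.sum_range_succ, Finset.sum_range_succ' (f := fun m =>
          qBinom q (M + 1) m * ((-1) ^ m * q ^ (m * (m + 1) / 2) / (1 - x * q ^ m))) (n := M),
        Finset.sum_range_succ' (f := fun m =>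
          qBinom q M m * ((-1) ^ m * q ^ (m * (m + 1) / 2) / (1 - x * q ^ m))) (n := M),
        Finset.sum_range_succ (n := M) (f := fun j =>
          q ^ (M - j) * (qBinom q M j *
            ((-1) ^ (j + 1) * q ^ ((j + 1) * (j + 1 + 1) / 2) / (1 - x * q ^ (j + 1)))))]
      rw [qBinom_zero hq, qBinom_zero hq, qBinom_self hq (M + 1), qBinom_self hq M,
        Nat.sub_self, pow_zero]
      have hterm : ∀ j ∈ Finset.range M,
          qBinom q (M + 1) (j + 1) *
              ((-1) ^ (j + 1) * q ^ ((j + 1) * (j + 1 + 1) / 2) / (1 - x * q ^ (j + 1))) =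
            qBinom q M (j + 1) *
                ((-1) ^ (j + 1) * q ^ ((j + 1) * (j + 1 + 1) / 2) / (1 - x * q ^ (j + 1))) +
              q ^ (M - j) * (qBinom q M j *
                ((-1) ^ (j + 1) * q ^ ((j + 1) * (j + 1 + 1) / 2) / (1 - x * q ^ (j + 1)))) := by
        intro j hj
        rw [Finset.mem_range] at hj
        have hp := pascal hq j (M - j - 1)
        rw [show j + (M - j - 1) + 2 = M + 1 by omega, show j + (M - j - 1) + 1 = M by omega,
          show M - j - 1 + 1 = M - j by omega] at hp
        rw [hp]; ring
      rw [Finset.sum_congr rfl hterm, Finset.sum_add_distrib]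
      ring
    rw [hsplit]
    -- second sum
    have hsum2 :
        ∑ j ∈ Finset.range (M + 1),
            q ^ (M - j) * (qBinom q M j *
              ((-1) ^ (j + 1) * q ^ ((j + 1) * (j + 1 + 1) / 2) / (1 - x * q ^ (j + 1)))) =
          -q ^ (M + 1) * ∑ j ∈ Finset.range (M + 1),
            qBinom q M j * ((-1) ^ j * q ^ (j * (j + 1) / 2) / (1 - x * q * q ^ j)) := by
      rw [Finset.mul_sum]
      refine Finset.sum_congr rfl fun j hj => ?_
      rw [Finset.mem_range] at hj
      obtain ⟨d, rfl⟩ := Nat.exists_eq_add_of_le (by omega : j ≤ M)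
      rw [Nat.add_sub_cancel_left, tri j]
      have hden : (1 : ℂ) - x * q ^ (j + 1) = 1 - x * q * q ^ j := by ring
      rw [hden, pow_add, div_eq_mul_inv, div_eq_mul_inv]
      ring
    rw [hsum2, IH x hx, IH (x * q) hxq]
    rw [qP_succ' x q (M + 1), qP_succ' x q M, qP_succ (x * q) q M, qP_succ q q M]
    have h1 : (1 : ℂ) - x ≠ 0 := by
      have := fac_ne hx hq 0
      simpa using this
    have h2 := qP_ne hxq hq M
    have h3 := fac_ne hxq hq M
    have h4 := qP_ne hq hq M
    field_simp
    ring

lemma icc_to_range (K : ℕ) (g : ℕ → ℂ) :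
    ∑ n ∈ Finset.Icc 1 K, g n = ∑ i ∈ Finset.range K, g (i + 1) := by
  rw [← Finset.Ico_add_one_right_eq_Icc, Finset.sum_Ico_eq_sum_range]
  norm_num
  exact Finset.sum_congr rfl fun i _ => by rw [add_comm]

/-- van Hamme's identity. -/
theorem stmt_0 (N : ℕ) (hN : 1 ≤ N) (q : ℂ) (hq : ‖q‖ < 1) :
    ∑ n ∈ Finset.Icc 1 N, q ^ n / (1 - q ^ n) =
      ∑ n ∈ Finset.Icc 1 N,
        qBinom q N n * ((-1) ^ (n - 1) * q ^ (n * (n + 1) / 2) / (1 - q ^ n)) := by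
  clear hN
  induction N with
  | zero => simp
  | succ N IH =>
    have hmain :
        ∑ n ∈ Finset.Icc 1 (N + 1),
            qBinom q (N + 1) n * ((-1) ^ (n - 1) * q ^ (n * (n + 1) / 2) / (1 - q ^ n)) =
          (∑ n ∈ Finset.Icc 1 N,
              qBinom q N n * ((-1) ^ (n - 1) * q ^ (n * (n + 1) / 2) / (1 - q ^ n))) +
            q ^ (N + 1) / (1 - q ^ (N + 1)) := by
      rw [icc_to_range, icc_to_range]
      have hsplit :
          ∑ i ∈ Finset.range (N + 1),
              qBinom q (N + 1) (i + 1) *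
                ((-1) ^ (i + 1 - 1) * q ^ ((i + 1) * (i + 1 + 1) / 2) / (1 - q ^ (i + 1))) =
            (∑ i ∈ Finset.range N,
                qBinom q N (i + 1) *
                  ((-1) ^ (i + 1 - 1) * q ^ ((i + 1) * (i + 1 + 1) / 2) / (1 - q ^ (i + 1)))) +
              ∑ i ∈ Finset.range (N + 1),
                q ^ (N - i) * (qBinom q N i *
                  ((-1) ^ i * q ^ ((i + 1) * (i + 1 + 1) / 2) / (1 - q ^ (i + 1)))) := by
        rw [Finset.sum_range_succ (f := fun i =>
            qBinom q (N + 1) (i + 1) *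
              ((-1) ^ (i + 1 - 1) * q ^ ((i + 1) * (i + 1 + 1) / 2) / (1 - q ^ (i + 1)))),
          Finset.sum_range_succ (f := fun i =>
            q ^ (N - i) * (qBinom q N i *
              ((-1) ^ i * q ^ ((i + 1) * (i + 1 + 1) / 2) / (1 - q ^ (i + 1))))),
          qBinom_self hq (N + 1), qBinom_self hq N, Nat.sub_self, pow_zero]
        have hterm : ∀ i ∈ Finset.range N,
            qBinom q (N + 1) (i + 1) *
                ((-1) ^ (i + 1 - 1) * q ^ ((i + 1) * (i + 1 + 1) / 2) / (1 - q ^ (i + 1))) =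
              qBinom q N (i + 1) *
                  ((-1) ^ (i + 1 - 1) * q ^ ((i + 1) * (i + 1 + 1) / 2) / (1 - q ^ (i + 1))) +
                q ^ (N - i) * (qBinom q N i *
                  ((-1) ^ i * q ^ ((i + 1) * (i + 1 + 1) / 2) / (1 - q ^ (i + 1)))) := by
          intro i hi
          rw [Finset.mem_range] at hi
          have hp := pascal hq i (N - i - 1)
          rw [show i + (N - i - 1) + 2 = N + 1 by omega, show i + (N - i - 1) + 1 = N by omega,
            show N - i - 1 + 1 = N - i by omega] at hp
          rw [hp, Nat.add_sub_cancel]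
          ring
        rw [Finset.sum_congr rfl hterm, Finset.sum_add_distrib]
        simp only [Nat.add_sub_cancel]
        ring
      rw [hsplit]
      congr 1
      -- second sum equals q^(N+1)/(1-q^(N+1))
      have h2 :
          ∑ i ∈ Finset.range (N + 1),
              q ^ (N - i) * (qBinom q N i *
                ((-1) ^ i * q ^ ((i + 1) * (i + 1 + 1) / 2) / (1 - q ^ (i + 1)))) =
            q ^ (N + 1) * ∑ i ∈ Finset.range (N + 1),
              qBinom q N i * ((-1) ^ i * q ^ (i * (i + 1) / 2) / (1 - q * q ^ i)) := by
        rw [Finset.mul_sum]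
        refine Finset.sum_congr rfl fun i hi => ?_
        rw [Finset.mem_range] at hi
        obtain ⟨d, rfl⟩ := Nat.exists_eq_add_of_le (by omega : i ≤ N)
        rw [Nat.add_sub_cancel_left, tri i]
        have hden : (1 : ℂ) - q ^ (i + 1) = 1 - q * q ^ i := by ring
        rw [hden, pow_add, div_eq_mul_inv, div_eq_mul_inv]
        ring
      rw [h2, pfrac hq N q hq, qP_succ q q N]
      have h4 := qP_ne hq hq N
      have h5 := fac_ne hq hq N
      have hden : (1 : ℂ) - q ^ (N + 1) = 1 - q * q ^ N := by ring
      rw [hden]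
      field_simp
    rw [Finset.sum_Icc_succ_top (f := fun n => q ^ n / (1 - q ^ n)) (by omega : 1 ≤ N + 1),
      IH, hmain]
end

section
/- For every natural number N ≥ 1, as an identity of formal power series in q (|q|<1): (1/(q;q)_N) ∑_{n=1}^{N} [N choose n] (-1)^{n-1} n q^{n(n+1)/2}/(1-q^n) = ∑_{n=1}^{N} q^n / ((1-q^n)^2 (q^{n+1};q)_{N-n}). -/
open Finset

namespace SptAux
variable {q : ℂ}

lemma one_sub_pow_ne (hq : ‖q‖ < 1) {n : ℕ} (hn : 1 ≤ n) : 1 - q ^ n ≠ 0 := by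
  intro h
  have h1 : q ^ n = 1 := by linear_combination -h
  have h2 : ‖q ^ n‖ < 1 := by
    rw [norm_pow]
    exact pow_lt_one₀ (norm_nonneg q) hq (by omega)
  rw [h1, norm_one] at h2; exact lt_irrefl 1 h2

lemma qP_eq (n : ℕ) : qP q q n = ∏ k ∈ range n, (1 - q ^ (k + 1)) := by
  unfold qP
  refine Finset.prod_congr rfl fun k _ => ?_
  rw [pow_succ']

lemma qP_ne (hq : ‖q‖ < 1) (n : ℕ) : qP q q n ≠ 0 := by
  rw [qP_eq]
  exact Finset.prod_ne_zero_iff.2 fun k _ => one_sub_pow_ne hq (by omega)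

lemma qP_succ (n : ℕ) : qP q q (n + 1) = qP q q n * (1 - q ^ (n + 1)) := by
  rw [qP_eq, qP_eq, Finset.prod_range_succ]

lemma qP_shift (n m : ℕ) : qP (q ^ (n + 1)) q m = ∏ k ∈ range m, (1 - q ^ (n + 1 + k)) := by
  unfold qP
  refine Finset.prod_congr rfl fun k _ => ?_
  rw [← pow_add]

lemma qP_shift_ne (hq : ‖q‖ < 1) (n m : ℕ) : qP (q ^ (n + 1)) q m ≠ 0 := by
  rw [qP_shift]
  exact Finset.prod_ne_zero_iff.2 fun k _ => one_sub_pow_ne hq (by omega)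

lemma qP_split {n N : ℕ} (h : n ≤ N) :
    qP q q N = qP q q n * qP (q ^ (n + 1)) q (N - n) := by
  obtain ⟨m, rfl⟩ := Nat.exists_eq_add_of_le h
  rw [Nat.add_sub_cancel_left, qP_eq, qP_eq, qP_shift, Finset.prod_range_add]
  congr 1
  refine Finset.prod_congr rfl fun k _ => ?_
  have h2 : n + k + 1 = n + 1 + k := by omega
  rw [h2]

lemma qP_zero : qP q q 0 = 1 := by simp [qP]

lemma qBinom_zero (hq : ‖q‖ < 1) (N : ℕ) : qBinom q N 0 = 1 := by
  unfold qBinom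
  rw [qP_zero, Nat.sub_zero, one_mul, div_self (qP_ne hq N)]

lemma qBinom_self (hq : ‖q‖ < 1) (N : ℕ) : qBinom q N N = 1 := by
  unfold qBinom
  rw [Nat.sub_self, qP_zero, mul_one, div_self (qP_ne hq N)]

lemma qBinom_pascal (hq : ‖q‖ < 1) {m M : ℕ} (h : m + 1 ≤ M) :
    qBinom q (M + 1) (m + 1) = qBinom q M (m + 1) + q ^ (M - m) * qBinom q M m := by
  have hMm : M - m = M - (m + 1) + 1 := by omega
  have e1 : qP q q (M + 1) = qP q q M * (1 - q ^ (M + 1)) := qP_succ _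
  have e2 : qP q q (m + 1) = qP q q m * (1 - q ^ (m + 1)) := qP_succ _
  have e3 : qP q q (M - m) = qP q q (M - (m + 1)) * (1 - q ^ (M - m)) := by
    rw [hMm, qP_succ, ← hMm]
  have hsub : M + 1 - (m + 1) = M - m := by omega
  have hpow : q ^ (M - m) * q ^ (m + 1) = q ^ (M + 1) := by
    rw [← pow_add]; congr 1; omega
  have n1 : qP q q M ≠ 0 := qP_ne hq M
  have n2 : qP q q m ≠ 0 := qP_ne hq m
  have n3 : qP q q (M - (m + 1)) ≠ 0 := qP_ne hq _
  have n4 : (1 - q ^ (m + 1)) ≠ 0 := one_sub_pow_ne hq (by omega)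
  have n5 : (1 - q ^ (M - m)) ≠ 0 := one_sub_pow_ne hq (by omega)
  unfold qBinom
  rw [hsub, e1, e2, e3, ← hpow]
  field_simp
  ring

lemma key_ratio (hq : ‖q‖ < 1) {m M : ℕ} (h : m ≤ M) :
    qBinom q (M + 1) (m + 1) * (1 - q ^ (m + 1)) = qBinom q M m * (1 - q ^ (M + 1)) := by
  have hsub : M + 1 - (m + 1) = M - m := by omega
  have e1 : qP q q (M + 1) = qP q q M * (1 - q ^ (M + 1)) := qP_succ _
  have e2 : qP q q (m + 1) = qP q q m * (1 - q ^ (m + 1)) := qP_succ _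
  have n1 : qP q q M ≠ 0 := qP_ne hq M
  have n2 : qP q q m ≠ 0 := qP_ne hq m
  have n3 : qP q q (M - m) ≠ 0 := qP_ne hq _
  have n4 : (1 - q ^ (m + 1)) ≠ 0 := one_sub_pow_ne hq (by omega)
  have hpow : q ^ (M - m) * q ^ (m + 1) = q ^ (M + 1) := by
    rw [← pow_add]; congr 1; omega
  unfold qBinom
  rw [hsub, e1, e2, ← hpow]
  field_simp
lemma tri (m : ℕ) : (m + 1) * m / 2 = m * (m - 1) / 2 + m := by
  rcases m with _ | k
  · rfl
  · have h1 : (k + 1 + 1) * (k + 1) = (k + 1) * k + (k + 1) * 2 := by ring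
    rw [Nat.succ_sub_one, h1, Nat.add_mul_div_right _ _ (by norm_num : 0 < 2)]

noncomputable def Zs (q : ℂ) (P : ℕ) : ℂ :=
  ∑ m ∈ range (P + 1), (-1) ^ m * qBinom q P m * q ^ (m * (m - 1) / 2)

noncomputable def Ss (q : ℂ) (L : ℕ) : ℂ :=
  ∑ n ∈ range L, (-1) ^ n * ((n : ℂ) + 1) * qBinom q L (n + 1) * q ^ ((n + 1) * n / 2)

lemma Z_succ (hq : ‖q‖ < 1) (P : ℕ) : Zs q (P + 1) = (1 - q ^ P) * Zs q P := by
  have step1 : Zs q (P + 1) = Zs q P +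
      ∑ j ∈ range (P + 1), (-1 : ℂ) ^ (j + 1) * q ^ (P - j) * qBinom q P j * q ^ ((j + 1) * j / 2) := by
    unfold Zs
    rw [Finset.sum_range_succ (n := P + 1), Finset.sum_range_succ' _ P,
      Finset.sum_range_succ' (fun m => (-1 : ℂ) ^ m * qBinom q P m * q ^ (m * (m - 1) / 2)) P,
      Finset.sum_range_succ (fun j => (-1 : ℂ) ^ (j + 1) * q ^ (P - j) * qBinom q P j * q ^ ((j + 1) * j / 2)) P]
    simp only [Nat.add_sub_cancel]
    have hstep : ∀ j ∈ range P,
        (-1 : ℂ) ^ (j + 1) * qBinom q (P + 1) (j + 1) * q ^ ((j + 1) * j / 2)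
          = (-1 : ℂ) ^ (j + 1) * qBinom q P (j + 1) * q ^ ((j + 1) * j / 2)
            + (-1 : ℂ) ^ (j + 1) * q ^ (P - j) * qBinom q P j * q ^ ((j + 1) * j / 2) := by
      intro j hj
      rw [qBinom_pascal hq (by simpa using (mem_range.1 hj))]
      ring
    rw [Finset.sum_congr rfl hstep, Finset.sum_add_distrib]
    have h0 : qBinom q (P + 1) 0 = qBinom q P 0 := by
      rw [qBinom_zero hq, qBinom_zero hq]
    have hP : qBinom q (P + 1) (P + 1) = qBinom q P P := by
      rw [qBinom_self hq, qBinom_self hq]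
    rw [h0, hP, Nat.sub_self]
    ring
  rw [step1]
  have step2 : ∀ j ∈ range (P + 1),
      (-1 : ℂ) ^ (j + 1) * q ^ (P - j) * qBinom q P j * q ^ ((j + 1) * j / 2)
        = -q ^ P * ((-1) ^ j * qBinom q P j * q ^ (j * (j - 1) / 2)) := by
    intro j hj
    have hj' : j ≤ P := by simpa [Nat.lt_succ_iff] using mem_range.1 hj
    have hpow : q ^ (P - j) * q ^ ((j + 1) * j / 2) = q ^ P * q ^ (j * (j - 1) / 2) := by
      rw [← pow_add, ← pow_add]
      congr 1
      have := tri j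
      omega
    calc (-1 : ℂ) ^ (j + 1) * q ^ (P - j) * qBinom q P j * q ^ ((j + 1) * j / 2)
        = (-1 : ℂ) ^ (j + 1) * qBinom q P j * (q ^ (P - j) * q ^ ((j + 1) * j / 2)) := by ring
      _ = (-1 : ℂ) ^ (j + 1) * qBinom q P j * (q ^ P * q ^ (j * (j - 1) / 2)) := by rw [hpow]
      _ = -q ^ P * ((-1) ^ j * qBinom q P j * q ^ (j * (j - 1) / 2)) := by
          rw [pow_succ]; ring
  rw [Finset.sum_congr rfl step2, ← Finset.mul_sum]
  unfold Zs
  ring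
lemma S_succ (hq : ‖q‖ < 1) (L : ℕ) :
    Ss q (L + 1) = (1 - q ^ L) * Ss q L + q ^ L * Zs q L := by
  have step1 : Ss q (L + 1) = Ss q L +
      ∑ n ∈ range (L + 1), (-1 : ℂ) ^ n * ((n : ℂ) + 1) * q ^ (L - n) * qBinom q L n * q ^ ((n + 1) * n / 2) := by
    unfold Ss
    rw [Finset.sum_range_succ (n := L),
      Finset.sum_range_succ (fun n => (-1 : ℂ) ^ n * ((n : ℂ) + 1) * q ^ (L - n) * qBinom q L n * q ^ ((n + 1) * n / 2)) L]
    have hstep : ∀ n ∈ range L,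
        (-1 : ℂ) ^ n * ((n : ℂ) + 1) * qBinom q (L + 1) (n + 1) * q ^ ((n + 1) * n / 2)
          = (-1 : ℂ) ^ n * ((n : ℂ) + 1) * qBinom q L (n + 1) * q ^ ((n + 1) * n / 2)
            + (-1 : ℂ) ^ n * ((n : ℂ) + 1) * q ^ (L - n) * qBinom q L n * q ^ ((n + 1) * n / 2) := by
      intro n hn
      rw [qBinom_pascal hq (by simpa using mem_range.1 hn)]
      ring
    rw [Finset.sum_congr rfl hstep, Finset.sum_add_distrib]
    rw [qBinom_self hq, qBinom_self hq, Nat.sub_self]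
    ring
  have step2 : ∀ n ∈ range (L + 1),
      (-1 : ℂ) ^ n * ((n : ℂ) + 1) * q ^ (L - n) * qBinom q L n * q ^ ((n + 1) * n / 2)
        = q ^ L * ((-1 : ℂ) ^ n * ((n : ℂ) + 1) * qBinom q L n * q ^ (n * (n - 1) / 2)) := by
    intro n hn
    have hn' : n ≤ L := by simpa [Nat.lt_succ_iff] using mem_range.1 hn
    have hpow : q ^ (L - n) * q ^ ((n + 1) * n / 2) = q ^ L * q ^ (n * (n - 1) / 2) := by
      rw [← pow_add, ← pow_add]; congr 1
      have := tri n; omega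
    calc (-1 : ℂ) ^ n * ((n : ℂ) + 1) * q ^ (L - n) * qBinom q L n * q ^ ((n + 1) * n / 2)
        = (-1 : ℂ) ^ n * ((n : ℂ) + 1) * qBinom q L n * (q ^ (L - n) * q ^ ((n + 1) * n / 2)) := by ring
      _ = (-1 : ℂ) ^ n * ((n : ℂ) + 1) * qBinom q L n * (q ^ L * q ^ (n * (n - 1) / 2)) := by rw [hpow]
      _ = q ^ L * ((-1 : ℂ) ^ n * ((n : ℂ) + 1) * qBinom q L n * q ^ (n * (n - 1) / 2)) := by ring
  have step3 : ∑ n ∈ range (L + 1), (-1 : ℂ) ^ n * ((n : ℂ) + 1) * qBinom q L n * q ^ (n * (n - 1) / 2)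
      = Zs q L - Ss q L := by
    have hsplit : ∀ n ∈ range (L + 1),
        (-1 : ℂ) ^ n * ((n : ℂ) + 1) * qBinom q L n * q ^ (n * (n - 1) / 2)
          = (-1 : ℂ) ^ n * qBinom q L n * q ^ (n * (n - 1) / 2)
            + (-1 : ℂ) ^ n * (n : ℂ) * qBinom q L n * q ^ (n * (n - 1) / 2) := by
      intro n _; ring
    rw [Finset.sum_congr rfl hsplit, Finset.sum_add_distrib]
    have h2 : ∑ n ∈ range (L + 1), (-1 : ℂ) ^ n * (n : ℂ) * qBinom q L n * q ^ (n * (n - 1) / 2)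
        = -Ss q L := by
      rw [Finset.sum_range_succ' (fun n => (-1 : ℂ) ^ n * (n : ℂ) * qBinom q L n * q ^ (n * (n - 1) / 2)) L]
      simp only [Nat.add_sub_cancel, Nat.cast_zero, Nat.cast_add, Nat.cast_one]
      have hterm : ∀ j ∈ range L,
          (-1 : ℂ) ^ (j + 1) * ((j : ℂ) + 1) * qBinom q L (j + 1) * q ^ ((j + 1) * j / 2)
            = -((-1 : ℂ) ^ j * ((j : ℂ) + 1) * qBinom q L (j + 1) * q ^ ((j + 1) * j / 2)) := by
        intro j _; rw [pow_succ]; ring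
      rw [Finset.sum_congr rfl hterm, Finset.sum_neg_distrib]
      unfold Ss
      ring
    rw [h2]
    unfold Zs
    ring
  rw [step1, Finset.sum_congr rfl step2, ← Finset.mul_sum, step3]
  ring

lemma Z_eq (hq : ‖q‖ < 1) (P : ℕ) : Zs q (P + 1) = 0 := by
  induction P with
  | zero => rw [Z_succ hq]; simp
  | succ k ih => rw [Z_succ hq, ih, mul_zero]

lemma S_eq (hq : ‖q‖ < 1) (L : ℕ) : Ss q (L + 1) = qP q q L := by
  induction L with
  | zero =>
      unfold Ss
      rw [Finset.sum_range_one, qBinom_self hq]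
      simp [qP_zero]
  | succ k ih =>
      rw [S_succ hq, ih, Z_eq hq, mul_zero, add_zero, qP_succ]
      ring
lemma tri2 (n N : ℕ) (h : n ≤ N) :
    N - n + (n + 1) * (n + 2) / 2 = N + 1 + n * (n + 1) / 2 := by
  have e : (n + 1) * (n + 2) = n * (n + 1) + (n + 1) * 2 := by ring
  rw [e, Nat.add_mul_div_right _ _ (by norm_num : 0 < 2)]
  omega

lemma U_eq (hq : ‖q‖ < 1) (M : ℕ) :
    ∑ m ∈ range (M + 1), (-1 : ℂ) ^ m * ((m : ℂ) + 1) * qBinom q M m * q ^ (m * (m + 1) / 2) / (1 - q ^ (m + 1))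
      = qP q q M / (1 - q ^ (M + 1)) := by
  have hterm : ∀ m ∈ range (M + 1),
      (-1 : ℂ) ^ m * ((m : ℂ) + 1) * qBinom q M m * q ^ (m * (m + 1) / 2) / (1 - q ^ (m + 1))
        = (-1 : ℂ) ^ m * ((m : ℂ) + 1) * qBinom q (M + 1) (m + 1) * q ^ ((m + 1) * m / 2) / (1 - q ^ (M + 1)) := by
    intro m hm
    have hm' : m ≤ M := by simpa [Nat.lt_succ_iff] using mem_range.1 hm
    rw [show m * (m + 1) / 2 = (m + 1) * m / 2 from by rw [Nat.mul_comm]]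
    have hr := key_ratio hq hm'
    have n4 : (1 - q ^ (m + 1)) ≠ 0 := one_sub_pow_ne hq (by omega)
    have n5 : (1 - q ^ (M + 1)) ≠ 0 := one_sub_pow_ne hq (by omega)
    rw [div_eq_div_iff n4 n5]
    linear_combination (-((-1 : ℂ) ^ m * ((m : ℂ) + 1) * q ^ ((m + 1) * m / 2))) * hr
  rw [Finset.sum_congr rfl hterm, ← Finset.sum_div]
  have hs := S_eq hq M
  unfold Ss at hs
  rw [hs]

lemma AB (hq : ‖q‖ < 1) (N : ℕ) :
    ∑ n ∈ range N, (-1 : ℂ) ^ n * ((n : ℂ) + 1) * qBinom q N (n + 1) * q ^ ((n + 1) * (n + 2) / 2) / (1 - q ^ (n + 1))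
      = ∑ n ∈ range N, qP q q n * q ^ (n + 1) / (1 - q ^ (n + 1)) := by
  induction N with
  | zero => simp
  | succ N ih =>
    have step1 : ∑ n ∈ range (N + 1), (-1 : ℂ) ^ n * ((n : ℂ) + 1) * qBinom q (N + 1) (n + 1) * q ^ ((n + 1) * (n + 2) / 2) / (1 - q ^ (n + 1))
        = (∑ n ∈ range N, (-1 : ℂ) ^ n * ((n : ℂ) + 1) * qBinom q N (n + 1) * q ^ ((n + 1) * (n + 2) / 2) / (1 - q ^ (n + 1)))
          + ∑ n ∈ range (N + 1), (-1 : ℂ) ^ n * ((n : ℂ) + 1) * q ^ (N - n) * qBinom q N n * q ^ ((n + 1) * (n + 2) / 2) / (1 - q ^ (n + 1)) := by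
      rw [Finset.sum_range_succ (n := N),
        Finset.sum_range_succ (fun n => (-1 : ℂ) ^ n * ((n : ℂ) + 1) * q ^ (N - n) * qBinom q N n * q ^ ((n + 1) * (n + 2) / 2) / (1 - q ^ (n + 1))) N]
      have hstep : ∀ n ∈ range N,
          (-1 : ℂ) ^ n * ((n : ℂ) + 1) * qBinom q (N + 1) (n + 1) * q ^ ((n + 1) * (n + 2) / 2) / (1 - q ^ (n + 1))
            = (-1 : ℂ) ^ n * ((n : ℂ) + 1) * qBinom q N (n + 1) * q ^ ((n + 1) * (n + 2) / 2) / (1 - q ^ (n + 1))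
              + (-1 : ℂ) ^ n * ((n : ℂ) + 1) * q ^ (N - n) * qBinom q N n * q ^ ((n + 1) * (n + 2) / 2) / (1 - q ^ (n + 1)) := by
        intro n hn
        rw [qBinom_pascal hq (by simpa using mem_range.1 hn)]
        ring
      rw [Finset.sum_congr rfl hstep, Finset.sum_add_distrib]
      rw [qBinom_self hq, qBinom_self hq, Nat.sub_self]
      ring
    have step2 : ∀ n ∈ range (N + 1),
        (-1 : ℂ) ^ n * ((n : ℂ) + 1) * q ^ (N - n) * qBinom q N n * q ^ ((n + 1) * (n + 2) / 2) / (1 - q ^ (n + 1))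
          = q ^ (N + 1) * ((-1 : ℂ) ^ n * ((n : ℂ) + 1) * qBinom q N n * q ^ (n * (n + 1) / 2) / (1 - q ^ (n + 1))) := by
      intro n hn
      have hn' : n ≤ N := by simpa [Nat.lt_succ_iff] using mem_range.1 hn
      have hpow : q ^ (N - n) * q ^ ((n + 1) * (n + 2) / 2) = q ^ (N + 1) * q ^ (n * (n + 1) / 2) := by
        rw [← pow_add, ← pow_add]; congr 1; exact tri2 n N hn'
      have hnum : (-1 : ℂ) ^ n * ((n : ℂ) + 1) * q ^ (N - n) * qBinom q N n * q ^ ((n + 1) * (n + 2) / 2)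
          = q ^ (N + 1) * ((-1 : ℂ) ^ n * ((n : ℂ) + 1) * qBinom q N n * q ^ (n * (n + 1) / 2)) := by
        linear_combination ((-1 : ℂ) ^ n * ((n : ℂ) + 1) * qBinom q N n) * hpow
      rw [← mul_div_assoc, hnum]
    rw [step1, ih, Finset.sum_congr rfl step2, ← Finset.mul_sum, U_eq hq N,
      Finset.sum_range_succ (fun n => qP q q n * q ^ (n + 1) / (1 - q ^ (n + 1))) N]
    ring
end SptAux

open SptAux in
/-- Generating function of spt(n,N). -/
theorem stmt_6 (N : ℕ) (hN : 1 ≤ N) (q : ℂ) (hq : ‖q‖ < 1) :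
    (1 / qP q q N) * ∑ n ∈ Finset.Icc 1 N,
        qBinom q N n * ((-1) ^ (n - 1) * (n : ℂ) * q ^ (n * (n + 1) / 2) / (1 - q ^ n)) =
      ∑ n ∈ Finset.Icc 1 N, q ^ n / ((1 - q ^ n) ^ 2 * qP (q ^ (n + 1)) q (N - n)) := by
  have hL : (∑ n ∈ Finset.Icc 1 N,
      qBinom q N n * ((-1) ^ (n - 1) * (n : ℂ) * q ^ (n * (n + 1) / 2) / (1 - q ^ n)))
      = ∑ i ∈ range N, (-1 : ℂ) ^ i * ((i : ℂ) + 1) * qBinom q N (i + 1) *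
          q ^ ((i + 1) * (i + 2) / 2) / (1 - q ^ (i + 1)) := by
    rw [← Finset.Ico_add_one_right_eq_Icc, Finset.sum_Ico_eq_sum_range]
    refine Finset.sum_congr (by norm_num) fun i _ => ?_
    have e1 : 1 + i - 1 = i := by omega
    have e3 : (1 + i) * (1 + i + 1) / 2 = (i + 1) * (i + 2) / 2 := by
      congr 1; ring
    have e2 : 1 + i = i + 1 := by omega
    rw [e1, e3, e2]
    push_cast
    ring
  have hR : (∑ n ∈ Finset.Icc 1 N, q ^ n / ((1 - q ^ n) ^ 2 * qP (q ^ (n + 1)) q (N - n)))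
      = ∑ i ∈ range N, qP q q i * q ^ (i + 1) / (1 - q ^ (i + 1)) / qP q q N := by
    rw [← Finset.Ico_add_one_right_eq_Icc, Finset.sum_Ico_eq_sum_range]
    refine Finset.sum_congr (by norm_num) fun i hi => ?_
    have hi' : i + 1 ≤ N := by simpa using mem_range.1 hi
    have e2 : 1 + i = i + 1 := by omega
    rw [e2]
    have hsp : qP q q N = qP q q (i + 1) * qP (q ^ (i + 1 + 1)) q (N - (i + 1)) :=
      qP_split hi'
    have hsucc : qP q q (i + 1) = qP q q i * (1 - q ^ (i + 1)) := qP_succ _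
    have nqi : qP q q i ≠ 0 := qP_ne hq i
    have n1 : 1 - q ^ (i + 1) ≠ 0 := one_sub_pow_ne hq (by omega)
    have nsh : qP (q ^ (i + 1 + 1)) q (N - (i + 1)) ≠ 0 := qP_shift_ne hq (i + 1) _
    rw [hsp, hsucc]
    field_simp
  rw [hL, hR, ← Finset.sum_div, ← AB hq N, one_div, inv_mul_eq_div]
end

section
/- For every natural number N ≥ 1 and |q|<1: (1/(q;q)_N) ∑_{n=1}^{N} q^n/(1-q^n)^2 = (1/(q;q)_N) ∑_{n=1}^{∞} n q^n (1-q^{Nn})/(1-q^n), i.e. ∑_{n=1}^{N} q^n/(1-q^n)^2 = ∑_{n=1}^{∞} n q^n (1-q^{Nn})/(1-q^n). -/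
open Finset

/-!
Expand each `q^n / (1 - q^n)^2 = ∑_{m ≥ 1} m q^{nm}` and interchange the finite sum over `n`
with the sum over `m`; the inner sum `∑_{n=1}^N (q^m)^n` is a finite geometric series, equal to
`q^m (1 - q^{Nm}) / (1 - q^m)`.
-/

section

variable {𝕜 : Type*} [NormedField 𝕜]

theorem hasSum_succ_mul_pow_succ [CompleteSpace 𝕜] {x : 𝕜} (hx : ‖x‖ < 1) :
    HasSum (fun m : ℕ => ((m : 𝕜) + 1) * x ^ (m + 1)) (x / (1 - x) ^ 2) := by
  simpa using (hasSum_nat_add_iff' (f := fun n : ℕ => (n : 𝕜) * x ^ n) 1).2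
    (hasSum_coe_mul_geometric_of_norm_lt_one hx)

theorem geom_sum_Icc_one {x : 𝕜} (hx : x ≠ 1) (N : ℕ) :
    ∑ i ∈ Icc 1 N, x ^ i = x * (1 - x ^ N) / (1 - x) := by
  rw [← Ico_add_one_right_eq_Icc, geom_sum_Ico' hx (by omega)]
  ring

end

theorem stmt_8_general (N : ℕ) (q : ℂ) (hq : ‖q‖ < 1) :
    ∑ n ∈ Finset.Icc 1 N, q ^ n / (1 - q ^ n) ^ 2 =
      ∑' n : ℕ, ((n : ℂ) + 1) * q ^ (n + 1) * (1 - q ^ (N * (n + 1))) / (1 - q ^ (n + 1)) := by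
  have hq_pow {k : ℕ} (hk : k ≠ 0) : ‖q ^ k‖ < 1 := by
    rw [norm_pow]
    exact pow_lt_one₀ (norm_nonneg q) hq hk
  have hExpand : HasSum (fun m : ℕ => ∑ n ∈ Icc 1 N, ((m : ℂ) + 1) * (q ^ n) ^ (m + 1))
      (∑ n ∈ Icc 1 N, q ^ n / (1 - q ^ n) ^ 2) :=
    hasSum_sum fun n hn => hasSum_succ_mul_pow_succ (hq_pow (by grind))
  rw [← hExpand.tsum_eq]
  refine tsum_congr fun m => ?_
  have hx : q ^ (m + 1) ≠ 1 := fun h => by simpa [h] using hq_pow m.succ_ne_zero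
  simp_rw [← mul_sum, ← pow_mul, mul_comm _ (m + 1), pow_mul, geom_sum_Icc_one hx]
  ring

theorem stmt_8 (N : ℕ) (hN : 1 ≤ N) (q : ℂ) (hq : ‖q‖ < 1) :
    ∑ n ∈ Finset.Icc 1 N, q ^ n / (1 - q ^ n) ^ 2 =
      ∑' n : ℕ, ((n : ℂ) + 1) * q ^ (n + 1) * (1 - q ^ (N * (n + 1))) / (1 - q ^ (n + 1)) :=
  stmt_8_general N q hq
end

section
/- For all natural numbers m, N ≥ 1: ∑_{n=0}^{m-1} (-1;q)_n q^n / (-q^N;q)_{n+1} = (1/(1-q^N)) ( (-1;q)_m/(-q^N;q)_m − 1 ). -/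
open Finset

/-!
The summand is a telescoping difference: since (a;q)_{n+1} = (a;q)_n (1 - a q^n), the ratios
r_n = (a;q)_n / (b;q)_n satisfy r_{n+1} - r_n = (b - a) (a;q)_n q^n / (b;q)_{n+1}.
With a = -1 and b = -q^N the sum over n < m is therefore (r_m - r_0) / (1 - q^N), and r_0 = 1.
-/

lemma qP_zero (a q : ℂ) : qP a q 0 = 1 := by
  simp [qP]

lemma qP_ne_zero_of_norm_lt_one {a q : ℂ} (ha : ‖a‖ < 1) (hq : ‖q‖ ≤ 1) (n : ℕ) :
    qP a q n ≠ 0 := by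
  refine Finset.prod_ne_zero_iff.mpr fun k _ => sub_ne_zero.mpr fun h => ?_
  have : ‖a * q ^ k‖ < 1 := by
    rw [norm_mul, norm_pow]
    exact (mul_le_of_le_one_right (norm_nonneg a) (pow_le_one₀ (norm_nonneg q) hq)).trans_lt ha
  simp [← h] at this

lemma qP_div_qP_succ_sub (a b q : ℂ) (n : ℕ) (hb : qP b q (n + 1) ≠ 0) :
    qP a q (n + 1) / qP b q (n + 1) - qP a q n / qP b q n =
      (b - a) * (qP a q n * q ^ n / qP b q (n + 1)) := by
  have hbn : qP b q n ≠ 0 := left_ne_zero_of_mul (qP_succ b q n ▸ hb)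
  rw [div_sub_div _ _ hb hbn, mul_div_assoc', div_eq_div_iff (mul_ne_zero hb hbn) hb, qP_succ a,
    qP_succ b]
  ring

lemma sub_mul_sum_qP_mul_pow_div (a b q : ℂ) (m : ℕ) (hb : ∀ n, qP b q n ≠ 0) :
    (b - a) * ∑ n ∈ range m, qP a q n * q ^ n / qP b q (n + 1) = qP a q m / qP b q m - 1 := by
  rw [mul_sum, ← sum_congr rfl fun n _ => qP_div_qP_succ_sub a b q n (hb (n + 1)),
    sum_range_sub (fun n => qP a q n / qP b q n), qP_zero, qP_zero, div_one]

theorem stmt_11_general (m N : ℕ) (hN : 1 ≤ N) (q : ℂ) (hq : ‖q‖ < 1) :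
    ∑ n ∈ Finset.range m, qP (-1) q n * q ^ n / qP (-(q ^ N)) q (n + 1) =
      (1 / (1 - q ^ N)) * (qP (-1) q m / qP (-(q ^ N)) q m - 1) := by
  have hqN : ‖q ^ N‖ < 1 := by
    rw [norm_pow]
    exact pow_lt_one₀ (norm_nonneg q) hq (by omega)
  have hsub : 1 - q ^ N ≠ 0 := sub_ne_zero.mpr fun h => by simp [← h] at hqN
  have hb : ∀ n, qP (-(q ^ N)) q n ≠ 0 :=
    qP_ne_zero_of_norm_lt_one (by rwa [norm_neg]) hq.le
  rw [← sub_mul_sum_qP_mul_pow_div (-1) _ q m hb, sub_neg_eq_add, neg_add_eq_sub, one_div,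
    inv_mul_cancel_left₀ hsub]

theorem stmt_11 (m N : ℕ) (hm : 1 ≤ m) (hN : 1 ≤ N) (q : ℂ) (hq : ‖q‖ < 1) :
    ∑ n ∈ Finset.range m, qP (-1) q n * q ^ n / qP (-(q ^ N)) q (n + 1) =
      (1 / (1 - q ^ N)) * (qP (-1) q m / qP (-(q ^ N)) q m - 1) :=
  stmt_11_general m N hN q hq
end

section
/- For every integer m ≥ 1 and |q|<1: ∑_{j=1}^{∞} (-1)^{j-1} ((q^j;q)_m − 1) = (1/2)((q;q)_m/(-q;q)_m − 1). (A finite analogue of the sum-of-tails identity.) -/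
open Finset

/-!
Write `a_j = (q^{j+1};q)_m`, `S_m = ∑ (-1)^j (a_j - 1)` and `U_m = ∑ (-1)^j q^j a_j`.
Peeling off the last factor of `a_j` gives `S_{m+1} = S_m - q^{m+1} U_m`, while the functional
equation `a_j (1 - q^{j+m+1}) = (1 - q^{j+1}) a_{j+1}` makes `q^{m+1} U_m` telescope against
`S_m` and `U_m` themselves, so that `(1 + q^{m+1}) U_m = 2 S_m + 1`. Together these show that
`2 S_m + 1` satisfies the same recursion as `(q;q)_m / (-q;q)_m`, namely multiplication by
`(1 - q^{m+1}) / (1 + q^{m+1})`.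
-/

theorem Summable.tsum_mul_add_tsum_succ {R : Type*} [Ring R] [TopologicalSpace R]
    [IsTopologicalRing R] [T2Space R] {f : ℕ → R} (hf : Summable f) (c : R) :
    ∑' j, (c * f j + f (j + 1)) = (c + 1) * ∑' j, f j - f 0 := by
  rw [(hf.mul_left c).tsum_add ((summable_nat_add_iff 1).2 hf), hf.tsum_mul_left,
    hf.tsum_eq_zero_add]
  noncomm_ring

namespace qP

theorem zero (a q : ℂ) : qP a q 0 = 1 := prod_range_zero _

theorem succ (a q : ℂ) (m : ℕ) : qP a q (m + 1) = qP a q m * (1 - a * q ^ m) :=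
  prod_range_succ _ _

theorem succ' (a q : ℂ) (m : ℕ) : qP a q (m + 1) = (1 - a) * qP (a * q) q m := by
  rw [qP, prod_range_succ', mul_comm]
  simp only [qP, pow_zero, mul_one, pow_succ, mul_assoc, mul_comm q]

theorem mul_one_sub (a q : ℂ) (m : ℕ) :
    qP a q m * (1 - a * q ^ m) = (1 - a) * qP (a * q) q m := by
  rw [← succ, succ']

theorem norm_le_two_pow {a q : ℂ} (ha : ‖a‖ ≤ 1) (hq : ‖q‖ ≤ 1) (m : ℕ) :
    ‖qP a q m‖ ≤ 2 ^ m := by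
  rw [qP, norm_prod]
  refine (prod_le_prod (fun _ _ => norm_nonneg _) fun k _ => ?_).trans_eq
    (by rw [prod_const, card_range])
  calc ‖1 - a * q ^ k‖ ≤ 1 + ‖a‖ * ‖q‖ ^ k := by
        simpa using norm_sub_le (1 : ℂ) (a * q ^ k)
    _ ≤ 1 + 1 * 1 := by gcongr; exact pow_le_one₀ (norm_nonneg _) hq
    _ = 2 := by norm_num

theorem norm_sub_one_le {a q : ℂ} (ha : ‖a‖ ≤ 1) (hq : ‖q‖ ≤ 1) (m : ℕ) :
    ‖qP a q m - 1‖ ≤ 2 ^ m * ‖a‖ := by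
  induction m with
  | zero => simp [zero]
  | succ m ih =>
    have hlast : ‖a * q ^ m * qP a q m‖ ≤ ‖a‖ * 1 * 2 ^ m := by
      rw [norm_mul, norm_mul, norm_pow]
      gcongr
      exacts [pow_le_one₀ (norm_nonneg _) hq, norm_le_two_pow ha hq m]
    calc ‖qP a q (m + 1) - 1‖ = ‖(qP a q m - 1) - a * q ^ m * qP a q m‖ := by
          rw [succ]; congr 1; ring
      _ ≤ 2 ^ m * ‖a‖ + ‖a‖ * 1 * 2 ^ m := (norm_sub_le _ _).trans (add_le_add ih hlast)
      _ = 2 ^ (m + 1) * ‖a‖ := by ring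

theorem neg_ne_zero {q : ℂ} (hq : ‖q‖ < 1) (m : ℕ) : qP (-q) q m ≠ 0 := by
  refine prod_ne_zero_iff.2 fun k _ h => ?_
  have hlt : ‖-q * q ^ k‖ < 1 := by
    rw [norm_mul, norm_neg, norm_pow, ← pow_succ']
    exact pow_lt_one₀ (norm_nonneg _) hq k.succ_ne_zero
  rw [← sub_eq_zero.1 h, norm_one] at hlt
  exact hlt.false

end qP

section TailSums

variable {q : ℂ} (hq : ‖q‖ < 1) (m : ℕ)

noncomputable def altTailSum (q : ℂ) (m : ℕ) : ℂ :=
  ∑' j : ℕ, (-1 : ℂ) ^ j * (qP (q ^ (j + 1)) q m - 1)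

noncomputable def altWeightedTailSum (q : ℂ) (m : ℕ) : ℂ :=
  ∑' j : ℕ, (-1 : ℂ) ^ j * q ^ j * qP (q ^ (j + 1)) q m

include hq

theorem norm_pow_succ_le_one (j : ℕ) : ‖q ^ (j + 1)‖ ≤ 1 := by
  rw [norm_pow]
  exact pow_le_one₀ (norm_nonneg _) hq.le

theorem summable_altTailSum :
    Summable fun j : ℕ => (-1 : ℂ) ^ j * (qP (q ^ (j + 1)) q m - 1) := by
  refine Summable.of_norm_bounded
    ((summable_geometric_of_lt_one (norm_nonneg q) hq).mul_left (2 ^ m * ‖q‖)) fun j => ?_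
  calc ‖(-1 : ℂ) ^ j * (qP (q ^ (j + 1)) q m - 1)‖ = ‖qP (q ^ (j + 1)) q m - 1‖ := by simp
    _ ≤ 2 ^ m * ‖q ^ (j + 1)‖ := qP.norm_sub_one_le (norm_pow_succ_le_one hq j) hq.le m
    _ = 2 ^ m * ‖q‖ * ‖q‖ ^ j := by rw [norm_pow, pow_succ']; ring

theorem summable_altWeightedTailSum :
    Summable fun j : ℕ => (-1 : ℂ) ^ j * q ^ j * qP (q ^ (j + 1)) q m := by
  refine Summable.of_norm_bounded
    ((summable_geometric_of_lt_one (norm_nonneg q) hq).mul_left (2 ^ m)) fun j => ?_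
  calc ‖(-1 : ℂ) ^ j * q ^ j * qP (q ^ (j + 1)) q m‖
        = ‖q‖ ^ j * ‖qP (q ^ (j + 1)) q m‖ := by simp
    _ ≤ ‖q‖ ^ j * 2 ^ m := by
        gcongr; exact qP.norm_le_two_pow (norm_pow_succ_le_one hq j) hq.le m
    _ = 2 ^ m * ‖q‖ ^ j := mul_comm _ _

theorem altTailSum_succ :
    altTailSum q (m + 1) = altTailSum q m - q ^ (m + 1) * altWeightedTailSum q m := by
  rw [altTailSum, altTailSum, altWeightedTailSum, ← tsum_mul_left,
    ← (summable_altTailSum hq m).tsum_sub ((summable_altWeightedTailSum hq m).mul_left _)]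
  exact tsum_congr fun j => by rw [qP.succ]; ring

theorem one_add_pow_mul_altWeightedTailSum :
    (1 + q ^ (m + 1)) * altWeightedTailSum q m = 2 * altTailSum q m + 1 := by
  set f : ℕ → ℂ := fun j => (-1 : ℂ) ^ j * (qP (q ^ (j + 1)) q m - 1)
  set g : ℕ → ℂ := fun j => (-1 : ℂ) ^ j * q ^ j * qP (q ^ (j + 1)) q m
  have htelescope : ∀ j, q ^ (m + 1) * g j + g (j + 1) = 1 * f j + f (j + 1) := fun j => by
    have h := qP.mul_one_sub (q ^ (j + 1)) q m
    simp only [f, g, ← pow_succ] at h ⊢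
    linear_combination -(-1 : ℂ) ^ j * h
  have hsum := (summable_altWeightedTailSum hq m).tsum_mul_add_tsum_succ (q ^ (m + 1))
  rw [tsum_congr htelescope, (summable_altTailSum hq m).tsum_mul_add_tsum_succ] at hsum
  simp only [pow_zero, zero_add, pow_one, one_mul, mul_one] at hsum
  rw [altWeightedTailSum, altTailSum]
  linear_combination -hsum

theorem two_mul_altTailSum_mul_qP_neg :
    2 * altTailSum q m * qP (-q) q m = qP q q m - qP (-q) q m := by
  induction m with
  | zero => simp [altTailSum, qP.zero]
  | succ m ih =>
    rw [altTailSum_succ hq, qP.succ, qP.succ, ← pow_succ']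
    linear_combination (1 - q ^ (m + 1)) * ih -
      2 * q ^ (m + 1) * qP (-q) q m * one_add_pow_mul_altWeightedTailSum hq m

end TailSums

theorem stmt_13_general (m : ℕ) (q : ℂ) (hq : ‖q‖ < 1) :
    ∑' j : ℕ, (-1 : ℂ) ^ j * (qP (q ^ (j + 1)) q m - 1) =
      (1 / 2) * (qP q q m / qP (-q) q m - 1) := by
  have hne := qP.neg_ne_zero hq m
  have h := two_mul_altTailSum_mul_qP_neg hq m
  rw [altTailSum] at h
  field_simp
  linear_combination h

/-- A finite analogue of the sum-of-tails identity. -/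
theorem stmt_13 (m : ℕ) (hm : 1 ≤ m) (q : ℂ) (hq : ‖q‖ < 1) :
    ∑' j : ℕ, (-1 : ℂ) ^ j * (qP (q ^ (j + 1)) q m - 1) =
      (1 / 2) * (qP q q m / qP (-q) q m - 1) :=
  stmt_13_general m q hq
end
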